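/- If T is a totally ordered cancellative residuated lattice with elements a ≤ e and b satisfying ab < ba², then for all n ≥ 1 one has aⁿb < ba^{2n} and abⁿ < bⁿa^{2ⁿ}. -/

import Mathlib

/-! A residuated lattice is an ordered monoid, and cancellativity makes its multiplication strictly
monotone on both sides. Then `a * b < b * a ^ k` can be iterated: pushing one more `a` across `b`
costs `k` more `a`'s, giving `a ^ n * b < b * a ^ (k * n)`, and pushing `a` across `b ^ (n + 1)`
means pushing `a ^ (k ^ n)` across one more `b`, giving `a * b ^ n < b ^ n * a ^ (k ^ n)`. -/

/-- A residuated lattice: a lattice-ordered monoid with left and right residuals. -/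
class ResiduatedLattice (α : Type*) extends Lattice α, Monoid α where
  /-- `ldiv a c` is `a \ c`. -/
  ldiv : α → α → α
  /-- `rdiv c b` is `c / b`. -/
  rdiv : α → α → α
  mul_le_iff_le_rdiv : ∀ a b c : α, a * b ≤ c ↔ a ≤ rdiv c b
  mul_le_iff_le_ldiv : ∀ a b c : α, a * b ≤ c ↔ b ≤ ldiv a c

open ResiduatedLattice

namespace ResiduatedLattice

variable {α : Type*} [ResiduatedLattice α]

instance : MulLeftMono α where
  elim y x z hxz := (mul_le_iff_le_ldiv y x (y * z)).mpr <|
    hxz.trans ((mul_le_iff_le_ldiv y z (y * z)).mp le_rfl)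

instance : MulRightMono α where
  elim y x z hxz := (mul_le_iff_le_rdiv x y (z * y)).mpr <|
    hxz.trans ((mul_le_iff_le_rdiv z y (z * y)).mp le_rfl)

theorem isRightCancelMul_of_rdiv_mul_cancel (h : ∀ x y : α, rdiv (x * y) y = x) :
    IsRightCancelMul α where
  mul_right_cancel y x z hxz := by
    simpa only [h] using congrArg (rdiv · y) hxz

theorem isLeftCancelMul_of_ldiv_mul_cancel (h : ∀ x y : α, ldiv y (y * x) = x) :
    IsLeftCancelMul α where
  mul_left_cancel y x z hxz := by
    simpa only [h] using congrArg (ldiv y) hxz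

end ResiduatedLattice

section StrictMono

variable {M : Type*} [Monoid M] [Preorder M] [MulLeftStrictMono M] [MulRightStrictMono M]
  {a b : M} {k : ℕ}

theorem pow_mul_lt_mul_pow_of_mul_lt_mul_pow (h : a * b < b * a ^ k) {n : ℕ} (hn : 1 ≤ n) :
    a ^ n * b < b * a ^ (k * n) := by
  induction n, hn using Nat.le_induction with
  | base => simpa using h
  | succ n _ ih =>
    calc a ^ (n + 1) * b = a * (a ^ n * b) := by rw [pow_succ', mul_assoc]
      _ < a * (b * a ^ (k * n)) := mul_lt_mul_right ih a
      _ = a * b * a ^ (k * n) := (mul_assoc _ _ _).symm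
      _ < b * a ^ k * a ^ (k * n) := mul_lt_mul_left h _
      _ = b * a ^ (k * (n + 1)) := by rw [mul_assoc, ← pow_add, mul_add_one, add_comm]

theorem mul_pow_lt_pow_mul_pow_of_mul_lt_mul_pow (hk : 1 ≤ k) (h : a * b < b * a ^ k) {n : ℕ}
    (hn : 1 ≤ n) : a * b ^ n < b ^ n * a ^ (k ^ n) := by
  induction n, hn using Nat.le_induction with
  | base => simpa using h
  | succ n _ ih =>
    calc a * b ^ (n + 1) = a * b ^ n * b := by rw [pow_succ, mul_assoc]
      _ < b ^ n * a ^ (k ^ n) * b := mul_lt_mul_left ih b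
      _ = b ^ n * (a ^ (k ^ n) * b) := mul_assoc _ _ _
      _ < b ^ n * (b * a ^ (k * k ^ n)) :=
          mul_lt_mul_right (pow_mul_lt_mul_pow_of_mul_lt_mul_pow h (Nat.one_le_pow _ _ hk)) _
      _ = b ^ (n + 1) * a ^ (k ^ (n + 1)) := by rw [← mul_assoc, ← pow_succ, pow_succ' k n]

end StrictMono

theorem nilpotency_counterexample_chains_general {α : Type*} [ResiduatedLattice α]
    (hcanc : ∀ x y : α, rdiv (x * y) y = x ∧ ldiv y (y * x) = x)
    (a b : α) (hab : a * b < b * a ^ 2) :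
    ∀ n : ℕ, 1 ≤ n → a ^ n * b < b * a ^ (2 * n) ∧ a * b ^ n < b ^ n * a ^ (2 ^ n) := by
  have := isRightCancelMul_of_rdiv_mul_cancel fun x y => (hcanc x y).1
  have := isLeftCancelMul_of_ldiv_mul_cancel fun x y => (hcanc x y).2
  exact fun n hn => ⟨pow_mul_lt_mul_pow_of_mul_lt_mul_pow hab hn,
    mul_pow_lt_pow_mul_pow_of_mul_lt_mul_pow one_le_two hab hn⟩

theorem nilpotency_counterexample_chains {α : Type*} [ResiduatedLattice α]
    (htot : ∀ x y : α, x ≤ y ∨ y ≤ x)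
    (hcanc : ∀ x y : α, rdiv (x * y) y = x ∧ ldiv y (y * x) = x)
    (a b : α) (ha : a ≤ 1) (hab : a * b < b * a ^ 2) :
    ∀ n : ℕ, 1 ≤ n → a ^ n * b < b * a ^ (2 * n) ∧ a * b ^ n < b ^ n * a ^ (2 ^ n) :=
  nilpotency_counterexample_chains_general hcanc a b hab
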